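/- Let n ≥ 5 and p = 2, and let V be the quotient of the permutation F_2-representation of S_n on F_2^n by the span of the all-ones vector, with n odd. Then H^1(A_n, V) = 0. -/

import Mathlib

/-!
Since `n` is odd, `x ↦ x + (Σ xᵢ) • (1, …, 1)` splits `F₂ⁿ → V` equivariantly, so `V` is a retract
of the permutation module `F₂ⁿ` and it suffices that every 1-cocycle `A_n → F₂ⁿ` is a coboundary.
As `A_n` is transitive on points, `F₂ⁿ` is coinduced from the trivial module of a point stabiliser
`A_{n-1}`, and by Shapiro's lemma this reduces to `Hom(A_{n-1}, F₂) = 0`, which holds because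
`A_{n-1}` is generated by 3-cycles.
-/

/-- The quotient representation on `M ⧸ S` for an invariant submodule `S`. -/
noncomputable def Representation.quot {k G M : Type} [CommRing k] [Group G] [AddCommGroup M]
    [Module k M] (ρ : Representation k G M) (S : Submodule k M)
    (hS : ∀ g : G, ∀ x ∈ S, ρ g x ∈ S) : Representation k G (M ⧸ S) where
  toFun g := S.mapQ S (ρ g) fun x hx => hS g x hx
  map_one' := Submodule.linearMap_qext _ (by ext x; simp)
  map_mul' g h := Submodule.linearMap_qext _ (by ext x; simp [Submodule.mapQ_apply])

/-- The permutation representation of `S_n` on `F_p[X]`, `X = {1,...,n}`. -/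
noncomputable def permRep (p n : ℕ) :
    Representation (ZMod p) (Equiv.Perm (Fin n)) (Fin n →₀ ZMod p) :=
  { toFun := fun g => Finsupp.lmapDomain (ZMod p) (ZMod p) (g • ·)
    map_one' := by ext x y; simp
    map_mul' := fun x y => by ext z w; simp [mul_smul, ← Finsupp.mapDomain_comp] }

/-- The sum of all basis vectors `e_1 + ... + e_n`. -/
noncomputable def allOnes (p n : ℕ) : Fin n →₀ ZMod p := ∑ i, Finsupp.single i 1

/-- The submodule `D` spanned by the sum of all basis vectors. -/
noncomputable def allOnesLine (p n : ℕ) : Submodule (ZMod p) (Fin n →₀ ZMod p) :=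
  Submodule.span (ZMod p) {allOnes p n}

lemma permRep_allOnes (p n : ℕ) (σ : Equiv.Perm (Fin n)) :
    permRep p n σ (allOnes p n) = allOnes p n := by
  unfold permRep allOnes
  rw [map_sum]
  refine Fintype.sum_equiv σ _ _ fun i => ?_
  simp [Finsupp.mapDomain_single]

lemma allOnesLine_invariant (p n : ℕ) (σ : Equiv.Perm (Fin n)) :
    ∀ x ∈ allOnesLine p n, permRep p n σ x ∈ allOnesLine p n := by
  intro x hx
  obtain ⟨c, rfl⟩ := Submodule.mem_span_singleton.1 hx
  rw [map_smul, permRep_allOnes]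
  exact Submodule.smul_mem _ _ (Submodule.mem_span_singleton_self _)

/-- The quotient `V = F_p[X]/D` of the permutation representation by the all-ones line. -/
noncomputable def stdQuotRep (p n : ℕ) :
    Representation (ZMod p) (Equiv.Perm (Fin n)) ((Fin n →₀ ZMod p) ⧸ allOnesLine p n) :=
  (permRep p n).quot (allOnesLine p n) (allOnesLine_invariant p n)

open Equiv Equiv.Perm MulAction

namespace Representation

universe u

variable {k G M N : Type*} [CommRing k] [Group G] [AddCommGroup M] [Module k M]
  [AddCommGroup N] [Module k N]

def IsCocycle₁ (ρ : Representation k G M) (f : G → M) : Prop :=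
  ∀ g h : G, f (g * h) = ρ g (f h) + f g

def IsCoboundary₁ (ρ : Representation k G M) (f : G → M) : Prop :=
  ∃ x : M, ∀ g : G, ρ g x - x = f g

lemma IsCocycle₁.isCoboundary₁_of_retract {ρ : Representation k G M} {σ : Representation k G N}
    {f : G → N} (hf : σ.IsCocycle₁ f) (hρ : ∀ f, ρ.IsCocycle₁ f → ρ.IsCoboundary₁ f)
    (π : M →ₗ[k] N) (s : N →ₗ[k] M) (hπ : ∀ g x, π (ρ g x) = σ g (π x))
    (hs : ∀ g x, s (σ g x) = ρ g (s x)) (hπs : ∀ x, π (s x) = x) :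
    σ.IsCoboundary₁ f := by
  obtain ⟨x, hx⟩ := hρ (s ∘ f) fun g h => by simp only [Function.comp_apply, hf g h, map_add, hs]
  exact ⟨π x, fun g => by rw [← hπ, ← map_sub, hx, Function.comp_apply, hπs]⟩

lemma subsingleton_H1_of_isCoboundary₁ {k G M : Type u} [CommRing k] [Group G] [AddCommGroup M]
    [Module k M] (ρ : Representation k G M)
    (hρ : ∀ f, ρ.IsCocycle₁ f → ρ.IsCoboundary₁ f) :
    Subsingleton (groupCohomology.H1 (Rep.of ρ)) := by
  have hzero (f : groupCohomology.cocycles₁ (Rep.of ρ)) : groupCohomology.H1π _ f = 0 := by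
    obtain ⟨x, hx⟩ := hρ f ((groupCohomology.mem_cocycles₁_iff _).1 f.2)
    exact (groupCohomology.H1π_eq_zero_iff _).2 ⟨x, funext hx⟩
  refine ⟨fun a b => ?_⟩
  induction a using groupCohomology.H1_induction_on
  induction b using groupCohomology.H1_induction_on
  rw [hzero, hzero]

end Representation

open Representation

section PermutationModule

variable {p n : ℕ}

lemma permRep_apply_apply (g : Perm (Fin n)) (x : Fin n →₀ ZMod p) (i : Fin n) :
    permRep p n g x i = x (g⁻¹ i) := by
  rw [← Finsupp.mapDomain_apply (MulAction.injective g) x (g⁻¹ i)]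
  simp [permRep]

lemma permRep_single (g : Perm (Fin n)) (i : Fin n) (a : ZMod p) :
    permRep p n g (Finsupp.single i a) = Finsupp.single (g i) a :=
  Finsupp.mapDomain_single

noncomputable def coordSum (p n : ℕ) : (Fin n →₀ ZMod p) →ₗ[ZMod p] ZMod p :=
  Finsupp.lsum (ZMod p) fun _ => LinearMap.id

lemma coordSum_single (i : Fin n) (a : ZMod p) : coordSum p n (Finsupp.single i a) = a := by
  simp [coordSum]

lemma coordSum_permRep (g : Perm (Fin n)) (x : Fin n →₀ ZMod p) :
    coordSum p n (permRep p n g x) = coordSum p n x := by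
  induction x using Finsupp.induction_linear with
  | zero => simp
  | add x y hx hy => simp only [map_add, hx, hy]
  | single i a => rw [permRep_single, coordSum_single, coordSum_single]

lemma coordSum_allOnes : coordSum p n (allOnes p n) = n := by
  simp [allOnes, coordSum_single]

noncomputable def stdQuotSection (hn : IsUnit (n : ZMod p)) :
    ((Fin n →₀ ZMod p) ⧸ allOnesLine p n) →ₗ[ZMod p] (Fin n →₀ ZMod p) :=
  (allOnesLine p n).liftQ
    (LinearMap.id - ((↑hn.unit⁻¹ : ZMod p) • coordSum p n).smulRight (allOnes p n)) <| by
    rw [allOnesLine, Submodule.span_le, Set.singleton_subset_iff]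
    simp [coordSum_allOnes]

lemma stdQuotSection_mk (hn : IsUnit (n : ZMod p)) (x : Fin n →₀ ZMod p) :
    stdQuotSection hn (Submodule.Quotient.mk x) =
      x - ((↑hn.unit⁻¹ : ZMod p) * coordSum p n x) • allOnes p n :=
  rfl

lemma mk_stdQuotSection (hn : IsUnit (n : ZMod p)) (x : (Fin n →₀ ZMod p) ⧸ allOnesLine p n) :
    Submodule.Quotient.mk (stdQuotSection hn x) = x := by
  obtain ⟨x, rfl⟩ := Submodule.Quotient.mk_surjective _ x
  have hD : (Submodule.Quotient.mk (allOnes p n) : (Fin n →₀ ZMod p) ⧸ allOnesLine p n) = 0 :=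
    (Submodule.Quotient.mk_eq_zero _).2 (Submodule.mem_span_singleton_self _)
  rw [stdQuotSection_mk, Submodule.Quotient.mk_sub, Submodule.Quotient.mk_smul, hD, smul_zero,
    sub_zero]

lemma stdQuotRep_mk (g : Perm (Fin n)) (x : Fin n →₀ ZMod p) :
    stdQuotRep p n g (Submodule.Quotient.mk x) = Submodule.Quotient.mk (permRep p n g x) :=
  rfl

lemma stdQuotSection_stdQuotRep (hn : IsUnit (n : ZMod p)) (g : Perm (Fin n))
    (x : (Fin n →₀ ZMod p) ⧸ allOnesLine p n) :
    stdQuotSection hn (stdQuotRep p n g x) = permRep p n g (stdQuotSection hn x) := by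
  obtain ⟨x, rfl⟩ := Submodule.Quotient.mk_surjective _ x
  rw [stdQuotRep_mk, stdQuotSection_mk, stdQuotSection_mk, coordSum_permRep, map_sub, map_smul,
    permRep_allOnes]

end PermutationModule

section Cocycles

variable {p n : ℕ} {G : Subgroup (Perm (Fin n))} {f : G → Fin n →₀ ZMod p}

lemma Representation.IsCocycle₁.apply_mul_of_apply_eq
    (hf : IsCocycle₁ ((permRep p n).comp G.subtype) f)
    {g : G} {j : Fin n} (hg : (g : Perm (Fin n)) j = j) (h : G) :
    f (g * h) j = f h j + f g j := by
  have hg' : (g : Perm (Fin n))⁻¹ j = j := by rw [Perm.inv_eq_iff_eq, hg]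
  rw [hf g h, Finsupp.add_apply, MonoidHom.comp_apply, Subgroup.coe_subtype, permRep_apply_apply,
    hg']

/-- Shapiro's lemma for a transitive permutation module, at the level of cocycles. -/
lemma Representation.IsCocycle₁.isCoboundary₁_of_isPretransitive [IsPretransitive G (Fin n)]
    (hf : IsCocycle₁ ((permRep p n).comp G.subtype) f)
    (hstab : ∀ (g : G) (j : Fin n), (g : Perm (Fin n)) j = j → f g j = 0) :
    IsCoboundary₁ ((permRep p n).comp G.subtype) f := by
  rcases isEmpty_or_nonempty (Fin n) with _ | ⟨⟨i₀⟩⟩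
  · exact ⟨0, fun g => Subsingleton.elim _ _⟩
  choose t ht using exists_smul_eq G i₀
  replace ht (i : Fin n) : (t i : Perm (Fin n)) i₀ = i := ht i
  set v : Fin n →₀ ZMod p := Finsupp.equivFunOnFinite.symm fun i => f (t i) i
  have hv (g : G) (i : Fin n) (hg : (g : Perm (Fin n)) i₀ = i) : f g i = v i := by
    have hti : ((t i)⁻¹ : Perm (Fin n)) i = i₀ := by rw [Perm.inv_eq_iff_eq, ht]
    have hfix : (((t i)⁻¹ * g : G) : Perm (Fin n)) i₀ = i₀ := by
      simp only [Subgroup.coe_mul, Subgroup.coe_inv, Perm.mul_apply, hg, hti]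
    calc f g i = f (t i * ((t i)⁻¹ * g)) i := by rw [mul_inv_cancel_left]
      _ = f ((t i)⁻¹ * g) i₀ + v i := by
        rw [hf, Finsupp.add_apply, MonoidHom.comp_apply, Subgroup.coe_subtype,
          permRep_apply_apply, hti]
        rfl
      _ = v i := by rw [hstab _ _ hfix, zero_add]
  refine ⟨-v, fun g => Finsupp.ext fun i => ?_⟩
  set j := (g : Perm (Fin n))⁻¹ i
  have hgt : ((g * t j : G) : Perm (Fin n)) i₀ = i := by simp [ht, j]
  have key : v i = v j + f g i := by
    rw [← hv _ _ hgt, hf, Finsupp.add_apply, MonoidHom.comp_apply, Subgroup.coe_subtype,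
      permRep_apply_apply, hv _ _ (ht j)]
  rw [MonoidHom.comp_apply, Subgroup.coe_subtype, Finsupp.sub_apply, permRep_apply_apply,
    Finsupp.neg_apply, Finsupp.neg_apply, key]
  ring

end Cocycles

section Alternating

variable {n : ℕ}

lemma alternatingGroup.monoidHom_eq_one {α H : Type*} [Fintype α] [DecidableEq α] [Group H]
    (hH : ∀ x : H, x ^ 3 = 1 → x = 1) (φ : alternatingGroup α →* H) : φ = 1 := by
  have hle : Subgroup.closure {σ : Perm α | σ.IsThreeCycle} ≤
      φ.ker.map (alternatingGroup α).subtype := by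
    refine Subgroup.closure_le _ |>.2 fun σ hσ => ⟨⟨σ, hσ.sign⟩, hH _ ?_, rfl⟩
    rw [← map_pow, ← map_one φ]
    exact congrArg φ (Subtype.ext (hσ.orderOf ▸ pow_orderOf_eq_one σ))
  rw [closure_three_cycles_eq_alternating] at hle
  ext ⟨σ, hσ⟩
  obtain ⟨τ, hτ, rfl⟩ := hle hσ
  exact hτ

lemma Representation.IsCocycle₁.apply_eq_zero_of_apply_eq
    {f : alternatingGroup (Fin n) → Fin n →₀ ZMod 2}
    (hf : IsCocycle₁ ((permRep 2 n).comp (alternatingGroup (Fin n)).subtype) f)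
    {g : alternatingGroup (Fin n)} {j : Fin n} (hg : (g : Perm (Fin n)) j = j) : f g j = 0 := by
  -- the stabiliser of `j` is the alternating group on the other points
  let ι : alternatingGroup {i // i ≠ j} →* alternatingGroup (Fin n) :=
    (ofSubtype.comp (alternatingGroup _).subtype).codRestrict _ fun σ =>
      mem_alternatingGroup.2 ((sign_ofSubtype _).trans (mem_alternatingGroup.1 σ.2))
  have hι (σ) : (ι σ : Perm (Fin n)) j = j := ofSubtype_apply_of_not_mem _ (by simp)
  let ψ : alternatingGroup {i // i ≠ j} →* Multiplicative (ZMod 2) :=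
    MonoidHom.mk' (fun σ => .ofAdd (f (ι σ) j)) fun σ τ => by
      rw [map_mul, hf.apply_mul_of_apply_eq (hι σ), ofAdd_add, mul_comm]
  have hψ : ψ = 1 := alternatingGroup.monoidHom_eq_one (by decide) ψ
  have hgfix (i : Fin n) : (g : Perm (Fin n)) i ≠ j ↔ i ≠ j :=
    (g : Perm (Fin n)).injective.ne_iff' hg
  have hg' : ofSubtype ((g : Perm (Fin n)).subtypePerm hgfix) = g :=
    ofSubtype_subtypePerm (p := (· ≠ j)) hgfix fun i hi hij => hi (hij ▸ hg)
  let σ : alternatingGroup {i // i ≠ j} :=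
    ⟨_, mem_alternatingGroup.2 ((sign_ofSubtype (p := (· ≠ j)) _).symm.trans
      (hg' ▸ mem_alternatingGroup.1 g.2))⟩
  have hσ : ι σ = g := Subtype.ext hg'
  simpa [ψ, hσ] using DFunLike.congr_fun hψ σ

end Alternating

/-- For odd `n ≥ 5`, the first cohomology of the alternating group `A_n`
acting on `V = F_2^n / span(1,…,1)` vanishes: `H¹(A_n, V) = 0`. -/
theorem statement4 (n : ℕ) (hn5 : 5 ≤ n) (hnodd : Odd n) :
    Subsingleton (groupCohomology.H1 (Rep.of
      (MonoidHom.comp (stdQuotRep 2 n) (alternatingGroup (Fin n)).subtype))) := by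
  have : IsPretransitive (alternatingGroup (Fin n)) (Fin n) :=
    alternatingGroup.isPretransitive_of_three_le_card _ (by rw [Nat.card_fin]; omega)
  have hunit : IsUnit (n : ZMod 2) :=
    (ZMod.isUnit_iff_coprime n 2).2 (Nat.coprime_two_right.2 hnodd)
  have hperm (f) (hf : IsCocycle₁ ((permRep 2 n).comp (alternatingGroup (Fin n)).subtype) f) :
      IsCoboundary₁ ((permRep 2 n).comp (alternatingGroup (Fin n)).subtype) f :=
    hf.isCoboundary₁_of_isPretransitive fun _ _ hg => hf.apply_eq_zero_of_apply_eq hg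
  refine subsingleton_H1_of_isCoboundary₁ _ fun f hf => ?_
  exact hf.isCoboundary₁_of_retract hperm (Submodule.mkQ _) (stdQuotSection hunit) (fun _ _ => rfl)
    (fun g => stdQuotSection_stdQuotRep hunit g) (mk_stdQuotSection hunit)
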